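/- arXiv:1208.5058 — 5 statements merged into one kernel-verified Lean document; each statement's English description precedes it below -/
import Mathlib

section
/- Let k, ℓ, m, n be positive integers with ℓ > k ≥ 2, n > ℓ + 1, m > k + 1, and F^(k)_m = F^(ℓ)_n. Then m < 2n. -/
/-!
`F^(k)_m` grows at least like the Fibonacci numbers, so at least like `(3/2)^(m-2)`, while
`F^(ℓ)_n` at most doubles at each step, so it is at most `2^(n-2)`. Equality of the two forces
`(3/2)^(m-2) ≤ 2^(n-2)`, and since `(3/2)^2 > 2` this gives `m - 2 ≤ 2 (n - 2)`.
-/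

/-- `gfib k i` is the `k`-generalized Fibonacci number `F^(k)_n` with the shifted index
`i = n + k - 2`: it is `0` for `i < k - 1` (i.e. `n ≤ 0`), `1` for `i = k - 1`
(i.e. `F^(k)_1 = 1`), and for `i ≥ k` (i.e. `n ≥ 2`) it is the sum of the `k`
preceding terms. -/
def gfib (k : ℕ) (i : ℕ) : ℕ :=
  if _h1 : i < k - 1 then 0
  else if _h2 : i = k - 1 then 1
  else ∑ j ∈ Finset.range k, gfib k (i - 1 - j)
termination_by i
decreasing_by
  simp_wf
  omega

/-- `genFib k n = F^(k)_n`, the `n`-th `k`-generalized Fibonacci number (for `n ≥ 0`). -/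
def genFib (k : ℕ) (n : ℕ) : ℕ := gfib k (n + k - 2)

open Finset

lemma gfib_of_lt_pred {k i : ℕ} (h : i < k - 1) : gfib k i = 0 := by
  rw [gfib, dif_pos h]

lemma gfib_pred (k : ℕ) : gfib k (k - 1) = 1 := by
  rw [gfib]; simp

lemma genFib_zero {k : ℕ} (hk : 2 ≤ k) : genFib k 0 = 0 :=
  gfib_of_lt_pred (by omega)

lemma genFib_one {k : ℕ} (hk : 2 ≤ k) : genFib k 1 = 1 := by
  rw [genFib, show 1 + k - 2 = k - 1 by omega, gfib_pred]

/-- Terms with `j > n + 1` stand for `F^(k)` at negative indices; the truncated index `0` gives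
them the right value `0`. -/
lemma genFib_add_two {k : ℕ} (hk : 2 ≤ k) (n : ℕ) :
    genFib k (n + 2) = ∑ j ∈ range k, genFib k (n + 1 - j) := by
  rw [genFib, gfib, dif_neg (by omega), dif_neg (by omega)]
  refine sum_congr rfl fun j _ => ?_
  by_cases hj : j ≤ n + 1
  · rw [genFib]; congr 1; omega
  · rw [gfib_of_lt_pred (by omega), show n + 1 - j = 0 by omega, genFib_zero hk]

lemma genFib_two {k : ℕ} (hk : 2 ≤ k) : genFib k 2 = 1 := by
  obtain ⟨k, rfl⟩ : ∃ k', k = k' + 1 := ⟨k - 1, by omega⟩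
  rw [genFib_add_two hk 0, sum_range_succ', genFib_one hk]
  simp [genFib_zero hk]

lemma genFib_add_le_genFib_add_two {k : ℕ} (hk : 2 ≤ k) (n : ℕ) :
    genFib k n + genFib k (n + 1) ≤ genFib k (n + 2) := by
  obtain ⟨k, rfl⟩ : ∃ k', k = k' + 2 := ⟨k - 2, by omega⟩
  rw [genFib_add_two hk, sum_range_succ', sum_range_succ']
  simp only [zero_add, Nat.sub_zero, show n + 1 - 1 = n by omega]
  omega

lemma genFib_add_three_le {k : ℕ} (hk : 2 ≤ k) (n : ℕ) :
    genFib k (n + 3) ≤ 2 * genFib k (n + 2) := by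
  obtain ⟨k, rfl⟩ : ∃ k', k = k' + 1 := ⟨k - 1, by omega⟩
  have hshift : ∑ j ∈ range k, genFib (k + 1) (n + 2 - (j + 1))
      ≤ genFib (k + 1) (n + 2) := by
    rw [genFib_add_two hk n, sum_range_succ]
    exact le_add_right (sum_le_sum fun j _ => le_of_eq (by congr 1; omega))
  rw [genFib_add_two hk (n + 1), sum_range_succ', Nat.sub_zero, show n + 1 + 1 = n + 2 from rfl]
  omega

theorem fib_le_genFib {k : ℕ} (hk : 2 ≤ k) : ∀ n, Nat.fib n ≤ genFib k n
  | 0 => by simp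
  | 1 => by simp [genFib_one hk]
  | n + 2 => by
    rw [Nat.fib_add_two]
    exact (add_le_add (fib_le_genFib hk n) (fib_le_genFib hk (n + 1))).trans
      (genFib_add_le_genFib_add_two hk n)

lemma genFib_add_two_le_two_pow {k : ℕ} (hk : 2 ≤ k) (n : ℕ) : genFib k (n + 2) ≤ 2 ^ n := by
  induction n with
  | zero => simp [genFib_two hk]
  | succ n ih =>
    calc genFib k (n + 3) ≤ 2 * genFib k (n + 2) := genFib_add_three_le hk n
      _ ≤ 2 ^ (n + 1) := by rw [pow_succ']; omega

lemma three_pow_le_two_pow_mul_fib_add_two (n : ℕ) : 3 ^ n ≤ 2 ^ n * Nat.fib (n + 2) := by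
  induction n with
  | zero => simp
  | succ n ih =>
    have hratio : 3 * Nat.fib (n + 2) ≤ 2 * Nat.fib (n + 3) := by
      have := Nat.fib_le_fib_succ (n := n)
      rw [Nat.fib_add_two (n := n + 1), Nat.fib_add_two (n := n)]
      omega
    calc 3 ^ (n + 1) = 3 * 3 ^ n := by ring
      _ ≤ 3 * (2 ^ n * Nat.fib (n + 2)) := Nat.mul_le_mul_left 3 ih
      _ = 2 ^ n * (3 * Nat.fib (n + 2)) := by ring
      _ ≤ 2 ^ n * (2 * Nat.fib (n + 3)) := Nat.mul_le_mul_left _ hratio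
      _ = 2 ^ (n + 1) * Nat.fib (n + 3) := by ring

/-- Squaring turns the hypothesis into `9 ^ a ≤ 2 ^ (2a + 2b)`, which exceeds `8 ^ a` when `a > 2b`. -/
lemma le_two_mul_of_three_pow_le_two_pow {a b : ℕ} (h : 3 ^ a ≤ 2 ^ (a + b)) : a ≤ 2 * b := by
  by_contra! hab
  have h9 : 9 ^ a ≤ 2 ^ (2 * a + 2 * b) := by
    calc 9 ^ a = 3 ^ a * 3 ^ a := by rw [← mul_pow]; norm_num
      _ ≤ 2 ^ (a + b) * 2 ^ (a + b) := Nat.mul_le_mul h h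
      _ = 2 ^ (2 * a + 2 * b) := by rw [← pow_add]; ring_nf
  have h8 : 2 ^ (2 * a + 2 * b) < 8 ^ a := by
    calc 2 ^ (2 * a + 2 * b) < 2 ^ (3 * a) := Nat.pow_lt_pow_right (by norm_num) (by omega)
      _ = 8 ^ a := by rw [pow_mul]; norm_num
  have h89 : 8 ^ a ≤ 9 ^ a := Nat.pow_le_pow_left (by norm_num) a
  omega

theorem m_lt_two_n (k l m n : ℕ) (hk : 2 ≤ k) (hkl : k < l)
    (hn : l + 1 < n) (hm : k + 1 < m) (heq : genFib k m = genFib l n) :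
    m < 2 * n := by
  obtain ⟨a, rfl⟩ : ∃ a, m = a + 2 := ⟨m - 2, by omega⟩
  obtain ⟨b, rfl⟩ : ∃ b, n = b + 2 := ⟨n - 2, by omega⟩
  have hgrowth : 3 ^ a ≤ 2 ^ (a + b) :=
    calc 3 ^ a ≤ 2 ^ a * Nat.fib (a + 2) := three_pow_le_two_pow_mul_fib_add_two a
      _ ≤ 2 ^ a * genFib k (a + 2) := Nat.mul_le_mul_left _ (fib_le_genFib hk _)
      _ = 2 ^ a * genFib l (b + 2) := by rw [heq]
      _ ≤ 2 ^ a * 2 ^ b := Nat.mul_le_mul_left _ (genFib_add_two_le_two_pow (by omega) b)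
      _ = 2 ^ (a + b) := (pow_add 2 a b).symm
  have := le_two_mul_of_three_pow_le_two_pow hgrowth
  omega
end

section
/- Let k ≥ 2 be an integer and let α = α(k) be the dominant root for k. Then g(α, k) > 1/4; moreover α > 3/2 and 2 + (k + 1)(α − 2) < 2. -/
/-!
Summing the geometric series turns `ψ_k(α) = 0` into `α ^ k * (2 - α) = 1`. Since `α ^ 2 ≤ α ^ k`,
this forces `α ^ 2 * (2 - α) ≤ 1`, i.e. `(α - 1) (α ^ 2 - α - 1) ≥ 0`, so `α` is at least the golden
ratio and in particular `α > 3/2`. Bernoulli's inequality then gives `α ^ k > (k + 1) / 2`, hence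
`(k + 1) (2 - α) = (k + 1) / α ^ k < 2`, so the denominator of `g α k` lies in `(0, 2)` while
its numerator exceeds `1/2`.
-/

/-- `g x y = (x - 1)/(2 + (y + 1)(x - 2))`. -/
noncomputable def g (x y : ℝ) : ℝ := (x - 1) / (2 + (y + 1) * (x - 2))

open Finset

theorem pow_mul_two_sub_eq_one_of_pow_eq_geom_sum {R : Type*} [CommRing R] {x : R} {k : ℕ}
    (h : x ^ k = ∑ j ∈ range k, x ^ j) : x ^ k * (2 - x) = 1 := by
  have := geom_sum_mul x k
  rw [← h] at this
  linear_combination -this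

theorem three_halves_lt_of_pow_mul_two_sub_eq_one {k : ℕ} (hk : 2 ≤ k) {α : ℝ} (hα : 1 < α)
    (h : α ^ k * (2 - α) = 1) : 3 / 2 < α := by
  have h2α : 0 < 2 - α := pos_of_mul_pos_right (h ▸ one_pos) (by positivity)
  have hsq : α ^ 2 * (2 - α) ≤ 1 :=
    h ▸ mul_le_mul_of_nonneg_right (pow_le_pow_right₀ hα.le hk) h2α.le
  nlinarith [mul_pos (sub_pos.mpr hα) (sub_pos.mpr hα)]

theorem succ_div_two_lt_pow_of_three_halves_le {α : ℝ} (hα : 3 / 2 ≤ α) (k : ℕ) :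
    ((k : ℝ) + 1) / 2 < α ^ k :=
  calc ((k : ℝ) + 1) / 2 < 1 + k * (1 / 2) := by linarith
    _ ≤ (1 + 1 / 2) ^ k := one_add_mul_le_pow (by norm_num) k
    _ ≤ α ^ k := pow_le_pow_left₀ (by norm_num) (by linarith) k

theorem g_alpha_gt_quarter_general (k : ℕ) (hk : 2 ≤ k)
    (α : ℝ) (hα1 : 1 < α)
    (hαroot : α ^ k = ∑ j ∈ Finset.range k, α ^ j) :
    g α k > 1 / 4 ∧ α > 3 / 2 ∧ 2 + ((k : ℝ) + 1) * (α - 2) < 2 := by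
  have hE := pow_mul_two_sub_eq_one_of_pow_eq_geom_sum hαroot
  have h2α : 0 < 2 - α := pos_of_mul_pos_right (hE ▸ one_pos) (by positivity)
  have hα : 3 / 2 < α := three_halves_lt_of_pow_mul_two_sub_eq_one hk hα1 hE
  have hD : ((k : ℝ) + 1) * (2 - α) < 2 := by
    have := mul_lt_mul_of_pos_right (succ_div_two_lt_pow_of_three_halves_le hα.le k) h2α
    linarith
  refine ⟨?_, hα, by nlinarith⟩
  have hD0 : 0 < 2 + ((k : ℝ) + 1) * (α - 2) := by nlinarith
  rw [g, gt_iff_lt, lt_div_iff₀ hD0]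
  nlinarith

theorem g_alpha_gt_quarter (k : ℕ) (hk : 2 ≤ k)
    (α : ℝ) (hα1 : 1 < α) (hα2 : α < 2)
    (hαroot : α ^ k = ∑ j ∈ Finset.range k, α ^ j) :
    g α k > 1 / 4 ∧ α > 3 / 2 ∧ 2 + ((k : ℝ) + 1) * (α - 2) < 2 :=
  g_alpha_gt_quarter_general k hk α hα1 hαroot
end

section
/- For every integer k ≥ 2, the real number γ_k = log α(k) / log 2 is irrational, where α(k) is the dominant root for k. -/
/-!
The polynomial `X^k - X^(k-1) - ⋯ - 1` is monic with constant term `-1`, so `α` is a unit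
algebraic integer: `α⁻¹` is integral over `ℤ`. If `log α / log 2` were rational, then
`α^q = 2^p` with `p ≥ 1`, making the rational number `2^(-p) = (α⁻¹)^q` an algebraic integer,
which is absurd since `ℤ` is integrally closed.
-/

open Polynomial Finset Real

theorem mul_pow_sub_geom_sum_eq_one {R : Type*} [Ring R] {x : R} {k : ℕ}
    (h : x ^ (k + 1) = ∑ j ∈ range (k + 1), x ^ j) :
    x * (x ^ k - ∑ j ∈ range k, x ^ j) = 1 := by
  rw [sum_range_succ', pow_zero] at h
  simp_rw [mul_sub, mul_sum, ← pow_succ']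
  exact sub_eq_of_eq_add' h

theorem isIntegral_of_pow_eq_geom_sum {A : Type*} [CommRing A] {x : A} {k : ℕ}
    (h : x ^ k = ∑ j ∈ range k, x ^ j) : IsIntegral ℤ x := by
  refine ⟨X ^ k - ∑ j ∈ range k, X ^ j, monic_X_pow_sub ?_, by simp [eval₂_finsetSum, h]⟩
  refine (degree_sum_le _ _).trans_lt <| (Finset.sup_lt_iff (WithBot.bot_lt_coe k)).2 fun j hj ↦ ?_
  exact (degree_X_pow_le j).trans_lt (WithBot.coe_lt_coe.2 (mem_range.1 hj))

theorem isIntegral_inv_of_pow_eq_geom_sum {K : Type*} [Field K] {x : K} {k : ℕ}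
    (h : x ^ k = ∑ j ∈ range k, x ^ j) : IsIntegral ℤ x⁻¹ := by
  obtain _ | k := k
  · simp at h
  have hx : IsIntegral ℤ x := isIntegral_of_pow_eq_geom_sum h
  rw [inv_eq_of_mul_eq_one_right (mul_pow_sub_geom_sum_eq_one h)]
  exact (hx.pow k).sub (IsIntegral.sum _ fun j _ ↦ hx.pow j)

theorem not_isIntegral_inv_natCast {K : Type*} [Field K] [CharZero K] {m : ℕ} (hm : 2 ≤ m) :
    ¬ IsIntegral ℤ (m : K)⁻¹ := by
  have hcast : (m : K)⁻¹ = algebraMap ℚ K (m : ℚ)⁻¹ := by simp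
  rw [hcast, isIntegral_algebraMap_iff (algebraMap ℚ K).injective,
    IsIntegrallyClosed.isIntegral_iff]
  rintro ⟨y, hy⟩
  have hmy : (m : ℤ) * y = 1 := by
    rw [eq_intCast] at hy
    exact_mod_cast (congrArg ((m : ℚ) * ·) hy).trans (mul_inv_cancel₀ (by positivity))
  have := Int.le_of_dvd one_pos ⟨y, hmy.symm⟩
  omega

theorem exists_pow_eq_pow_of_log_div_log_eq_ratCast {x y : ℝ} (hx : 1 < x) (hy : 1 < y) {r : ℚ}
    (hr : log x / log y = r) : ∃ p q : ℕ, 0 < p ∧ 0 < q ∧ x ^ q = y ^ p := by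
  have hlogx := log_pos hx
  have hlogy := log_pos hy
  have hr0 : 0 < r := by exact_mod_cast hr ▸ div_pos hlogx hlogy
  obtain ⟨p, hp⟩ := Int.eq_ofNat_of_zero_le (Rat.num_nonneg.2 hr0.le)
  refine ⟨p, r.den, by have := Rat.num_pos.2 hr0; omega, r.den_pos, log_injOn_pos
    (Set.mem_Ioi.2 (by positivity)) (Set.mem_Ioi.2 (by positivity)) ?_⟩
  have hrq : (r : ℝ) * r.den = p := by exact_mod_cast hp ▸ Rat.mul_den_eq_num r
  rw [log_pow, log_pow, ← hrq, ← hr]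
  field_simp

theorem irrational_log_div_log_natCast_of_isIntegral_inv {x : ℝ} (hx : 1 < x)
    (hint : IsIntegral ℤ x⁻¹) {m : ℕ} (hm : 2 ≤ m) : Irrational (log x / log m) := by
  rintro ⟨r, hr⟩
  obtain ⟨p, q, hp, -, hxq⟩ :=
    exists_pow_eq_pow_of_log_div_log_eq_ratCast hx (by exact_mod_cast hm) hr.symm
  have hmp : 2 ≤ m ^ p := hm.trans (Nat.le_self_pow hp.ne' m)
  have hcast : ((m ^ p : ℕ) : ℝ)⁻¹ = x⁻¹ ^ q := by rw [inv_pow, hxq, Nat.cast_pow]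
  exact not_isIntegral_inv_natCast hmp (hcast ▸ hint.pow q)

theorem gamma_k_irrational_general (k : ℕ)
    (α : ℝ) (hα1 : 1 < α)
    (hαroot : α ^ k = ∑ j ∈ Finset.range k, α ^ j) :
    Irrational (Real.log α / Real.log 2) := by
  simpa using irrational_log_div_log_natCast_of_isIntegral_inv hα1
    (isIntegral_inv_of_pow_eq_geom_sum hαroot) le_rfl

theorem gamma_k_irrational (k : ℕ) (hk : 2 ≤ k)
    (α : ℝ) (hα1 : 1 < α) (hα2 : α < 2)
    (hαroot : α ^ k = ∑ j ∈ Finset.range k, α ^ j) :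
    Irrational (Real.log α / Real.log 2) :=
  gamma_k_irrational_general k α hα1 hαroot
end

section
/- Let k, ℓ, m, n be positive integers with ℓ > k ≥ 2, n > ℓ + 1, m > k + 1, and F^(k)_m = F^(ℓ)_n. Assume moreover that n < 2^{ℓ/2} and m < 2^{k/2}. Then |2^{n−m} − 1| < 11/2^{k/2}. -/
/-! From `F^(k)_(n+1) = 2 F^(k)_n - F^(k)_(n-k)` and `F^(k)_j ≤ 2^(j-2)` one gets, for `n ≥ 2`,
`2^(n-2) (1 - (n-1-k) / 2^k) ≤ F^(k)_n ≤ 2^(n-2)`. When `n < 2^(k/2)` this puts `F^(k)_n`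
between `2^(n-2) (1 - 2^(-k/2))` and `2^(n-2)`, so a common value of `F^(k)_m` and `F^(ℓ)_n`
pins `2^(n-2) / 2^(m-2)` between `1 - 2^(-k/2)` and `1 / (1 - 2^(-k/2)) ≤ 1 + 2 · 2^(-k/2)`. -/

namespace genFib

variable {k : ℕ}

theorem zero (hk : 2 ≤ k) : genFib k 0 = 0 := by
  rw [genFib, gfib, dif_pos (by omega)]

theorem one (hk : 1 ≤ k) : genFib k 1 = 1 := by
  rw [genFib, gfib, dif_neg (by omega), dif_pos (by omega)]

-- Truncated subtraction is harmless here: indices `n - 1 - j` that should be negative become `0`,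
-- where `genFib k` also vanishes.
theorem eq_sum (hk : 2 ≤ k) {n : ℕ} (hn : 2 ≤ n) :
    genFib k n = ∑ j ∈ Finset.range k, genFib k (n - 1 - j) := by
  rw [genFib, gfib, dif_neg (by omega), dif_neg (by omega)]
  refine Finset.sum_congr rfl fun j _ => ?_
  rcases lt_or_ge j n with hj | hj
  · rw [genFib]; congr 1; omega
  · rw [show n - 1 - j = 0 by omega, zero hk, gfib, dif_pos (by omega)]

theorem two (hk : 2 ≤ k) : genFib k 2 = 1 := by
  obtain ⟨k, rfl⟩ : ∃ k', k = k' + 1 := ⟨k - 1, by omega⟩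
  rw [eq_sum hk le_rfl, Finset.sum_range_succ']
  simp [zero hk, one]

theorem succ_add_sub (hk : 2 ≤ k) {n : ℕ} (hn : 2 ≤ n) :
    genFib k (n + 1) + genFib k (n - k) = 2 * genFib k n := by
  obtain ⟨k', rfl⟩ : ∃ k', k = k' + 1 := ⟨k - 1, by omega⟩
  have hsucc := eq_sum hk (by omega : 2 ≤ n + 1)
  have hself := eq_sum hk hn
  rw [Finset.sum_range_succ'] at hsucc
  rw [Finset.sum_range_succ, show n - 1 - k' = n - (k' + 1) by omega] at hself
  have hshift : ∑ j ∈ Finset.range k', genFib (k' + 1) (n + 1 - 1 - (j + 1)) =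
      ∑ j ∈ Finset.range k', genFib (k' + 1) (n - 1 - j) :=
    Finset.sum_congr rfl fun j _ => by congr 1; omega
  rw [hshift, show n + 1 - 1 - 0 = n by omega] at hsucc
  omega

theorem add_two_le_two_pow (hk : 2 ≤ k) (n : ℕ) : genFib k (n + 2) ≤ 2 ^ n := by
  induction n with
  | zero => simp [two hk]
  | succ n ih =>
    have hrec := succ_add_sub hk (by omega : 2 ≤ n + 2)
    show genFib k (n + 2 + 1) ≤ 2 ^ (n + 1)
    rw [pow_succ]
    omega

theorem le_two_pow (hk : 2 ≤ k) : ∀ n, genFib k n ≤ 2 ^ (n - 2)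
  | 0 => by simp [zero hk]
  | 1 => by simp [one (by omega : 1 ≤ k)]
  | n + 2 => add_two_le_two_pow hk n

theorem two_pow_mul_two_pow_le_add (hk : 2 ≤ k) (n : ℕ) :
    2 ^ k * 2 ^ n ≤ 2 ^ k * genFib k (n + 2) + (n + 1 - k) * 2 ^ n := by
  induction n with
  | zero => simp [two hk]
  | succ n ih =>
    have hrec := succ_add_sub hk (by omega : 2 ≤ n + 2)
    have htail : 2 ^ k * genFib k (n + 2 - k) + (n + 1 - k) * 2 ^ (n + 1) ≤
        (n + 1 + 1 - k) * 2 ^ (n + 1) := by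
      rcases le_or_gt k (n + 1) with hkn | hkn
      · have hF : 2 ^ k * genFib k (n + 2 - k) ≤ 2 ^ (n + 1) :=
          calc 2 ^ k * genFib k (n + 2 - k) ≤ 2 ^ k * 2 ^ (n + 2 - k - 2) :=
                Nat.mul_le_mul_left _ (le_two_pow hk _)
            _ = 2 ^ (k + (n + 2 - k - 2)) := (pow_add 2 _ _).symm
            _ ≤ 2 ^ (n + 1) := Nat.pow_le_pow_right (by norm_num) (by omega)
        have hcoeff : (n + 1 + 1 - k) * 2 ^ (n + 1) = (n + 1 - k) * 2 ^ (n + 1) + 2 ^ (n + 1) := by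
          rw [show n + 1 + 1 - k = n + 1 - k + 1 by omega]; ring
        omega
      · rw [Nat.sub_eq_zero_of_le (by omega : n + 2 ≤ k), zero hk,
          Nat.sub_eq_zero_of_le (by omega : n + 1 ≤ k)]
        simp
    calc 2 ^ k * 2 ^ (n + 1) = 2 * (2 ^ k * 2 ^ n) := by ring
      _ ≤ 2 * (2 ^ k * genFib k (n + 2) + (n + 1 - k) * 2 ^ n) := Nat.mul_le_mul_left _ ih
      _ = 2 ^ k * (genFib k (n + 2 + 1) + genFib k (n + 2 - k)) + (n + 1 - k) * 2 ^ (n + 1) := by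
        rw [hrec]; ring
      _ ≤ 2 ^ k * genFib k (n + 2 + 1) + (n + 1 + 1 - k) * 2 ^ (n + 1) := by
        rw [mul_add]; omega

theorem two_pow_mul_one_sub_lt (hk : 2 ≤ k) {n : ℕ} (hn : 2 ≤ n)
    (hsmall : (n : ℝ) < (2 : ℝ) ^ ((k : ℝ) / 2)) :
    (2 : ℝ) ^ (n - 2) * (1 - 1 / (2 : ℝ) ^ ((k : ℝ) / 2)) < genFib k n := by
  set s := (2 : ℝ) ^ ((k : ℝ) / 2)
  have hs : 0 < s := by positivity
  have hss : s * s = 2 ^ k := by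
    rw [← Real.rpow_add two_pos, add_halves, Real.rpow_natCast]
  obtain ⟨n, rfl⟩ : ∃ n', n = n' + 2 := ⟨n - 2, by omega⟩
  have hdef : (s * s) * 2 ^ n ≤ (s * s) * genFib k (n + 2) + ((n + 1 - k : ℕ) : ℝ) * 2 ^ n := by
    rw [hss]; exact_mod_cast two_pow_mul_two_pow_le_add hk n
  have hcoeff : ((n + 1 - k : ℕ) : ℝ) < s :=
    lt_of_le_of_lt (by exact_mod_cast (by omega : n + 1 - k ≤ n + 2)) hsmall
  rw [Nat.add_sub_cancel, show (2 : ℝ) ^ n * (1 - 1 / s) = (s * s * 2 ^ n - s * 2 ^ n) / (s * s) by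
    field_simp, div_lt_iff₀ (by positivity)]
  linarith [mul_lt_mul_of_pos_right hcoeff (pow_pos two_pos n)]

end genFib

theorem abs_div_sub_one_lt_two_mul {x y δ : ℝ} (hx : 0 < x) (hδ : δ ≤ 1 / 2)
    (hxy : x * (1 - δ) < y) (hyx : y * (1 - δ) < x) : |y / x - 1| < 2 * δ := by
  have hy : 0 < y := lt_of_le_of_lt (by nlinarith) hxy
  have hδ0 : 0 < δ := pos_of_mul_pos_right (by linarith : 0 < (x + y) * δ) (by positivity)
  rw [abs_lt, div_sub_one hx.ne', lt_div_iff₀ hx, div_lt_iff₀ hx]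
  constructor <;> nlinarith

theorem powers_of_two_close (k l m n : ℕ) (hk : 2 ≤ k) (hkl : k < l)
    (hn : l + 1 < n) (hm : k + 1 < m) (heq : genFib k m = genFib l n)
    (hnsmall : (n : ℝ) < (2 : ℝ) ^ ((l : ℝ) / 2))
    (hmsmall : (m : ℝ) < (2 : ℝ) ^ ((k : ℝ) / 2)) :
    |(2 : ℝ) ^ ((n : ℤ) - (m : ℤ)) - 1| < 11 / (2 : ℝ) ^ ((k : ℝ) / 2) := by
  set s := (2 : ℝ) ^ ((k : ℝ) / 2)
  have hk' : (2 : ℝ) ≤ k := by exact_mod_cast hk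
  have hs : 2 ≤ s := by
    simpa using Real.rpow_le_rpow_of_exponent_le one_le_two (by linarith : (1 : ℝ) ≤ k / 2)
  have hst : 1 / (2 : ℝ) ^ ((l : ℝ) / 2) ≤ 1 / s := by
    refine one_div_le_one_div_of_le (by positivity) (Real.rpow_le_rpow_of_exponent_le one_le_two ?_)
    gcongr
  have hFm := genFib.two_pow_mul_one_sub_lt hk (by omega : 2 ≤ m) hmsmall
  have hFn : (2 : ℝ) ^ (n - 2) * (1 - 1 / s) < genFib l n :=
    lt_of_le_of_lt (by gcongr) (genFib.two_pow_mul_one_sub_lt (hk.trans hkl.le) (by omega) hnsmall)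
  have hFm' : (genFib k m : ℝ) ≤ 2 ^ (m - 2) := by exact_mod_cast genFib.le_two_pow hk m
  have hFn' : (genFib l n : ℝ) ≤ 2 ^ (n - 2) := by
    exact_mod_cast genFib.le_two_pow (hk.trans hkl.le) n
  have hpow : (2 : ℝ) ^ ((n : ℤ) - (m : ℤ)) = 2 ^ (n - 2) / 2 ^ (m - 2) := by
    rw [show (n : ℤ) - m = ((n - 2 : ℕ) : ℤ) - ((m - 2 : ℕ) : ℤ) by omega,
      zpow_sub₀ two_ne_zero, zpow_natCast, zpow_natCast]
  rw [heq] at hFm hFm'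
  have hclose := abs_div_sub_one_lt_two_mul (x := 2 ^ (m - 2)) (y := 2 ^ (n - 2)) (δ := 1 / s)
    (by positivity) (by rw [div_le_div_iff₀] <;> linarith)
    (by linarith) (by linarith)
  rw [hpow]
  calc _ < 2 * (1 / s) := hclose
    _ ≤ 11 / s := by rw [mul_one_div]; gcongr; norm_num
end

section
/- Let M be a positive integer, let γ be an irrational real number, and let p/q be a convergent of the continued fraction expansion of γ with q > 6M. Let μ, A, B be real numbers with A > 0 and B > 1, and set ε = ‖μq‖ − M·‖γq‖, where ‖x‖ denotes the distance from the real number x to the nearest integer. If ε > 0, then there is no solution to the inequality 0 < mγ − n + μ < A·B^{−w} in positive integers m, n, w with m ≤ M and w ≥ log(Aq/ε)/log B. -/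
/-!
Write `x = mγ - n + μ`. Then `μq` differs from `q x - m (γq - round (γq))` by an integer, so
`‖μq‖ ≤ q |x| + m ‖γq‖ ≤ q x + M ‖γq‖`, i.e. `ε ≤ q x`. On the other hand the lower bound on `w`
says exactly that `q A B⁻ʷ ≤ ε`, so `x < A B⁻ʷ` would give `q x < ε`.
-/

open Real

lemma abs_mul_sub_round_le {α : Type*} [Field α] [LinearOrder α] [IsStrictOrderedRing α]
    [FloorRing α] (γ μ : α) (q m : ℕ) (n : ℤ) :
    |μ * q - round (μ * q)| ≤ q * |m * γ - n + μ| + m * |γ * q - round (γ * q)| :=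
  calc |μ * q - round (μ * q)|
      ≤ |μ * q - ((n * q - m * round (γ * q) : ℤ) : α)| := round_le _ _
    _ = |q * (m * γ - n + μ) - m * (γ * q - round (γ * q))| := by push_cast; ring_nf
    _ ≤ |q * (m * γ - n + μ)| + |m * (γ * q - round (γ * q))| := abs_sub _ _
    _ = q * |m * γ - n + μ| + m * |γ * q - round (γ * q)| := by
      rw [abs_mul, abs_mul, Nat.abs_cast, Nat.abs_cast]

lemma le_pow_of_log_div_log_le {B c : ℝ} {w : ℕ} (hB : 1 < B) (hc : 0 < c)
    (h : log c / log B ≤ w) : c ≤ B ^ w := by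
  rwa [log_div_log, logb_le_iff_le_rpow hB hc, rpow_natCast] at h

theorem dujella_petho_general (M : ℕ) (γ : ℝ) (q : ℕ) (μ A B : ℝ) (hA : 0 < A) (hB : 1 < B) (ε : ℝ)
    (hε : ε = |μ * q - round (μ * q)| - M * |γ * q - round (γ * q)|)
    (hεpos : 0 < ε) :
    ¬ ∃ m n w : ℕ, 0 < m ∧ 0 < n ∧ 0 < w ∧ m ≤ M ∧
        Real.log (A * q / ε) / Real.log B ≤ w ∧
        0 < m * γ - n + μ ∧ m * γ - n + μ < A * B ^ (-(w : ℤ)) := by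
  rintro ⟨m, n, w, -, -, -, hmM, hw, hpos, hlt⟩
  have hq : (0 : ℝ) < q := by
    rcases Nat.eq_zero_or_pos q with rfl | hq
    · simp only [Nat.cast_zero, mul_zero, round_zero, Int.cast_zero, sub_zero, abs_zero] at hε
      linarith
    · exact_mod_cast hq
  have hε_le : ε ≤ q * (m * γ - n + μ) := by
    have key := abs_mul_sub_round_le γ μ q m n
    have hmM' : (m : ℝ) * |γ * q - round (γ * q)| ≤ M * |γ * q - round (γ * q)| := by gcongr
    push_cast at key
    rw [abs_of_pos hpos] at key
    linarith
  have hlt_ε : q * (m * γ - n + μ) < ε :=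
    calc q * (m * γ - n + μ) < q * (A * B ^ (-(w : ℤ))) := by gcongr
      _ = A * q / B ^ w := by rw [zpow_neg, zpow_natCast]; ring
      _ ≤ ε := by
        have hBw := le_pow_of_log_div_log_le hB (by positivity) hw
        rw [div_le_iff₀ hεpos] at hBw
        rw [div_le_iff₀ (by positivity)]
        linarith
  linarith

theorem dujella_petho (M : ℕ) (hM : 0 < M) (γ : ℝ) (hγ : Irrational γ)
    (i : ℕ) (p : ℤ) (q : ℕ)
    (hp : (p : ℝ) = (GenContFract.of γ).nums i)
    (hq : (q : ℝ) = (GenContFract.of γ).dens i)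
    (hq6 : 6 * M < q)
    (μ A B : ℝ) (hA : 0 < A) (hB : 1 < B)
    (ε : ℝ)
    (hε : ε = |μ * q - round (μ * q)| - M * |γ * q - round (γ * q)|)
    (hεpos : 0 < ε) :
    ¬ ∃ m n w : ℕ, 0 < m ∧ 0 < n ∧ 0 < w ∧ m ≤ M ∧
        Real.log (A * q / ε) / Real.log B ≤ w ∧
        0 < m * γ - n + μ ∧ m * γ - n + μ < A * B ^ (-(w : ℤ)) :=
  dujella_petho_general M γ q μ A B hA hB ε hε hεpos
end
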